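/- arXiv:1103.0331 — 5 statements merged into one kernel-verified Lean document; each statement's English description precedes it below -/
import Mathlib

section
/- For all nonnegative integers m, s_2(3m+1) ≤ 2·s_2(m) + 1. -/
def s2 (m : ℕ) : ℕ := (Nat.digits 2 m).sum

lemma s2_two_mul (n : ℕ) : s2 (2 * n) = s2 n := by
  rcases Nat.eq_zero_or_pos n with h | h
  · simp [h, s2]
  · unfold s2
    rw [Nat.digits_def' (by norm_num) (by omega)]
    simp [Nat.mul_div_cancel_left, Nat.mul_mod_right]

lemma s2_two_mul_add_one (n : ℕ) : s2 (2 * n + 1) = s2 n + 1 := by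
  unfold s2
  rw [Nat.digits_def' (by norm_num) (by omega)]
  have h1 : (2 * n + 1) % 2 = 1 := by omega
  have h2 : (2 * n + 1) / 2 = n := by omega
  rw [h1, h2]
  simp [add_comm]

lemma s2_key (m : ℕ) : s2 (3 * m) ≤ 2 * s2 m ∧ s2 (3 * m + 1) ≤ 2 * s2 m + 1 ∧
    s2 (3 * m + 2) ≤ 2 * s2 m + 2 := by
  induction m using Nat.strong_induction_on with
  | _ m ih =>
    rcases Nat.eq_zero_or_pos m with h | h
    · subst h; simp [s2]
    rcases Nat.even_or_odd m with ⟨k, hk⟩ | ⟨k, hk⟩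
    · subst hk
      obtain ⟨hA, hB, hC⟩ := ih k (by omega)
      have e0 : 3 * (k + k) = 2 * (3 * k) := by ring
      have e1 : 3 * (k + k) + 1 = 2 * (3 * k) + 1 := by ring
      have e2 : 3 * (k + k) + 2 = 2 * (3 * k + 1) := by ring
      have em : k + k = 2 * k := by ring
      rw [e2, e1, e0, em, s2_two_mul_add_one, s2_two_mul, s2_two_mul, s2_two_mul]
      omega
    · subst hk
      obtain ⟨hA, hB, hC⟩ := ih k (by omega)
      have e0 : 3 * (2 * k + 1) = 2 * (3 * k + 1) + 1 := by ring
      have e1 : 3 * (2 * k + 1) + 1 = 2 * (3 * k + 2) := by ring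
      have e2 : 3 * (2 * k + 1) + 2 = 2 * (3 * k + 2) + 1 := by ring
      rw [e2, e1, e0, s2_two_mul_add_one, s2_two_mul, s2_two_mul_add_one,
        s2_two_mul_add_one]
      omega

theorem s2_three_m_plus_one (m : ℕ) : s2 (3 * m + 1) ≤ 2 * s2 m + 1 :=
  (s2_key m).2.1
end

section
/- For every positive integer k, the difference (sum over j from 0 to k-1 of s_2(j+2k)) minus (sum over j from 0 to k-1 of s_2(j)) is strictly less than 2k. -/
lemma s2_pos : ∀ n : ℕ, 0 < n → 0 < s2 n := by
  intro n
  induction n using Nat.strong_induction_on with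
  | _ n ih =>
    intro hn
    rcases Nat.even_or_odd n with ⟨m, hm⟩ | ⟨m, hm⟩
    · have hn2 : n = 2 * m := by omega
      have hm0 : 0 < m := by omega
      rw [hn2, s2_two_mul]
      exact ih m (by omega) hm0
    · rw [hm, s2_two_mul_add_one]
      omega

lemma s2_zero : s2 0 = 0 := by simp [s2]

lemma s2_one : s2 1 = 1 := by
  have := s2_two_mul_add_one 0
  rw [s2_zero] at this
  simpa using this

/-- Subadditivity of the binary digit sum. -/
lemma s2_add_le : ∀ n : ℕ, ∀ x y : ℕ, x + y = n → s2 (x + y) ≤ s2 x + s2 y := by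
  intro n
  induction n using Nat.strong_induction_on with
  | _ n ih =>
    intro x y hxy
    rcases Nat.even_or_odd x with ⟨u, hu⟩ | ⟨u, hu⟩ <;>
      rcases Nat.even_or_odd y with ⟨v, hv⟩ | ⟨v, hv⟩
    · -- x = 2u, y = 2v
      have hx : x = 2 * u := by omega
      have hy : y = 2 * v := by omega
      have e : x + y = 2 * (u + v) := by omega
      rw [e, hx, hy, s2_two_mul, s2_two_mul, s2_two_mul]
      rcases Nat.eq_zero_or_pos n with hn | hn
      · have hu0 : u = 0 := by omega
        have hv0 : v = 0 := by omega
        simp [hu0, hv0, s2_zero]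
      · exact ih (u + v) (by omega) u v rfl
    · -- x = 2u, y = 2v+1
      have hx : x = 2 * u := by omega
      have e : x + y = 2 * (u + v) + 1 := by omega
      rw [e, hx, hv, s2_two_mul_add_one, s2_two_mul, s2_two_mul_add_one]
      have : s2 (u + v) ≤ s2 u + s2 v := by
        rcases Nat.eq_zero_or_pos (u + v) with h0 | h0
        · have : u = 0 ∧ v = 0 := by omega
          simp [this.1, this.2]
        · exact ih (u + v) (by omega) u v rfl
      omega
    · -- x = 2u+1, y = 2v
      have hy : y = 2 * v := by omega
      have e : x + y = 2 * (u + v) + 1 := by omega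
      rw [e, hu, hy, s2_two_mul_add_one, s2_two_mul_add_one, s2_two_mul]
      have : s2 (u + v) ≤ s2 u + s2 v := by
        rcases Nat.eq_zero_or_pos (u + v) with h0 | h0
        · have : u = 0 ∧ v = 0 := by omega
          simp [this.1, this.2]
        · exact ih (u + v) (by omega) u v rfl
      omega
    · -- x = 2u+1, y = 2v+1
      have e : x + y = 2 * (u + v + 1) := by omega
      rw [e, hu, hv, s2_two_mul, s2_two_mul_add_one, s2_two_mul_add_one]
      have h1 : s2 (u + (v + 1)) ≤ s2 u + s2 (v + 1) :=
        ih (u + v + 1) (by omega) u (v + 1) (by omega)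
      have h2 : s2 (v + 1) ≤ s2 v + s2 1 := ih (v + 1) (by omega) v 1 rfl
      have h3 : u + (v + 1) = u + v + 1 := by omega
      rw [h3] at h1
      rw [s2_one] at h2
      omega

/-- Sum of binary digit sums below `n`. -/
def Ssum (n : ℕ) : ℕ := ∑ j ∈ Finset.range n, s2 j

lemma Ssum_succ (n : ℕ) : Ssum (n + 1) = Ssum n + s2 n :=
  Finset.sum_range_succ _ _

lemma Ssum_double (n : ℕ) : Ssum (2 * n) = 2 * Ssum n + n := by
  induction n with
  | zero => simp [Ssum]
  | succ t ih =>
    have e : 2 * (t + 1) = 2 * t + 1 + 1 := by ring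
    rw [e, Ssum_succ, Ssum_succ, s2_two_mul, s2_two_mul_add_one, ih, Ssum_succ]
    ring

/-- The key invariant system, proved by binary induction. -/
lemma key : ∀ m : ℕ, 0 < m →
    (Ssum (3 * m) + s2 m ≤ 3 * Ssum m + 3 * m ∧
     2 * Ssum (3 * m) + 2 * s2 (3 * m) + s2 (3 * m + 1)
       ≤ 6 * Ssum m + 6 * m + 2 * s2 m + 1 ∧
     4 * Ssum (3 * m) + 4 * s2 (3 * m) + 4 * s2 (3 * m + 1) + s2 (3 * m + 2)
       ≤ 12 * Ssum m + 12 * m + 8 * s2 m + 5) ∧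
    (2 ≤ m →
     Ssum (3 * m) + s2 (3 * m) + s2 (3 * m + 1) + s2 (3 * m + 2)
       ≤ 3 * Ssum m + 3 * m + 3 * s2 m + 2) := by
  have hv0 : s2 0 = 0 := by simp [s2]
  have hv1 : s2 1 = 1 := s2_one
  have hv2 : s2 2 = 1 := by have := s2_two_mul 1; simpa [hv1] using this
  have hv3 : s2 3 = 2 := by have := s2_two_mul_add_one 1; simpa [hv1] using this
  have hv4 : s2 4 = 1 := by have := s2_two_mul 2; simpa [hv2] using this
  have hv5 : s2 5 = 2 := by have := s2_two_mul_add_one 2; simpa [hv2] using this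
  have hv6 : s2 6 = 2 := by have := s2_two_mul 3; simpa [hv3] using this
  have hv7 : s2 7 = 3 := by have := s2_two_mul_add_one 3; simpa [hv3] using this
  have hv8 : s2 8 = 1 := by have := s2_two_mul 4; simpa [hv4] using this
  have hv9 : s2 9 = 2 := by have := s2_two_mul_add_one 4; simpa [hv4] using this
  have hv10 : s2 10 = 2 := by have := s2_two_mul 5; simpa [hv5] using this
  have hv11 : s2 11 = 3 := by have := s2_two_mul_add_one 5; simpa [hv5] using this
  have hS : ∀ i : ℕ, Ssum (i + 1) = Ssum i + s2 i := Ssum_succ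
  have hS0 : Ssum 0 = 0 := by simp [Ssum]
  intro m
  induction m using Nat.strong_induction_on with
  | _ m ih =>
    intro hm
    rcases Nat.lt_or_ge m 4 with hm4 | hm4
    · -- base cases m = 1, 2, 3
      have hS1 := hS 0; have hS2 := hS 1; have hS3 := hS 2
      have hS4 := hS 3; have hS5 := hS 4; have hS6 := hS 5
      have hS7 := hS 6; have hS8 := hS 7; have hS9 := hS 8
      interval_cases m <;> simp_all
    · rcases Nat.even_or_odd m with ⟨t, htm⟩ | ⟨t, htm⟩
      · -- even case: m = 2 * t, t ≥ 2
        have hmt : m = 2 * t := by omega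
        have ht1 : 2 ≤ t := by omega
        obtain ⟨⟨I1, I2, I4⟩, hJ⟩ := ih t (by omega) (by omega)
        have I3 := hJ ht1
        have e1 : Ssum (3 * m) = 2 * Ssum (3 * t) + 3 * t := by
          rw [hmt, show 3 * (2 * t) = 2 * (3 * t) by ring, Ssum_double]
        have e2 : Ssum m = 2 * Ssum t + t := by rw [hmt, Ssum_double]
        have e3 : s2 m = s2 t := by rw [hmt, s2_two_mul]
        have e4 : s2 (3 * m) = s2 (3 * t) := by
          rw [hmt, show 3 * (2 * t) = 2 * (3 * t) by ring, s2_two_mul]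
        have e5 : s2 (3 * m + 1) = s2 (3 * t) + 1 := by
          rw [hmt, show 3 * (2 * t) + 1 = 2 * (3 * t) + 1 by ring, s2_two_mul_add_one]
        have e6 : s2 (3 * m + 2) = s2 (3 * t + 1) := by
          rw [hmt, show 3 * (2 * t) + 2 = 2 * (3 * t + 1) by ring, s2_two_mul]
        have p1 := s2_pos t (by omega)
        have p2 := s2_pos (3 * t) (by omega)
        have p3 := s2_pos (3 * t + 1) (by omega)
        have p4 := s2_pos (3 * t + 2) (by omega)
        have q1 : s2 (3 * t) ≤ 2 * s2 t := by
          have h := s2_add_le (t + 2 * t) t (2 * t) rfl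
          rw [s2_two_mul] at h
          have : t + 2 * t = 3 * t := by ring
          rw [this] at h
          omega
        have q2 : s2 (3 * t + 1) ≤ s2 (3 * t) + 1 := by
          have h := s2_add_le (3 * t + 1) (3 * t) 1 rfl
          rw [s2_one] at h
          omega
        have q3 : s2 (3 * t + 2) ≤ s2 (3 * t + 1) + 1 := by
          have h := s2_add_le (3 * t + 1 + 1) (3 * t + 1) 1 rfl
          rw [s2_one] at h
          have : 3 * t + 1 + 1 = 3 * t + 2 := by ring
          rw [this] at h
          omega
        have q4 : s2 (3 * t + 2) ≤ s2 (3 * t) + 1 := by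
          have h := s2_add_le (3 * t + 2) (3 * t) 2 rfl
          rw [hv2] at h
          omega
        omega
      · -- odd case: m = 2 * t + 1, t ≥ 2
        have ht1 : 2 ≤ t := by omega
        obtain ⟨⟨I1, I2, I4⟩, hJ⟩ := ih t (by omega) (by omega)
        have I3 := hJ ht1
        have e1 : Ssum (3 * m) = 2 * Ssum (3 * t) + 2 * s2 (3 * t)
            + (3 * t + 1) + s2 (3 * t + 1) := by
          rw [htm, show 3 * (2 * t + 1) = 2 * (3 * t + 1) + 1 by ring,
            Ssum_succ, Ssum_double, Ssum_succ, s2_two_mul]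
          ring
        have e2 : Ssum m = 2 * Ssum t + t + s2 t := by
          rw [htm, show 2 * t + 1 = 2 * t + 1 by rfl, Ssum_succ, Ssum_double,
            s2_two_mul]
        have e3 : s2 m = s2 t + 1 := by rw [htm, s2_two_mul_add_one]
        have e4 : s2 (3 * m) = s2 (3 * t + 1) + 1 := by
          rw [htm, show 3 * (2 * t + 1) = 2 * (3 * t + 1) + 1 by ring,
            s2_two_mul_add_one]
        have e5 : s2 (3 * m + 1) = s2 (3 * t + 2) := by
          rw [htm, show 3 * (2 * t + 1) + 1 = 2 * (3 * t + 2) by ring, s2_two_mul]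
        have e6 : s2 (3 * m + 2) = s2 (3 * t + 2) + 1 := by
          rw [htm, show 3 * (2 * t + 1) + 2 = 2 * (3 * t + 2) + 1 by ring,
            s2_two_mul_add_one]
        have p1 := s2_pos t (by omega)
        have p2 := s2_pos (3 * t) (by omega)
        have p3 := s2_pos (3 * t + 1) (by omega)
        have p4 := s2_pos (3 * t + 2) (by omega)
        have q1 : s2 (3 * t) ≤ 2 * s2 t := by
          have h := s2_add_le (t + 2 * t) t (2 * t) rfl
          rw [s2_two_mul] at h
          have : t + 2 * t = 3 * t := by ring
          rw [this] at h
          omega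
        have q2 : s2 (3 * t + 1) ≤ s2 (3 * t) + 1 := by
          have h := s2_add_le (3 * t + 1) (3 * t) 1 rfl
          rw [s2_one] at h
          omega
        have q3 : s2 (3 * t + 2) ≤ s2 (3 * t + 1) + 1 := by
          have h := s2_add_le (3 * t + 1 + 1) (3 * t + 1) 1 rfl
          rw [s2_one] at h
          have : 3 * t + 1 + 1 = 3 * t + 2 := by ring
          rw [this] at h
          omega
        have q4 : s2 (3 * t + 2) ≤ s2 (3 * t) + 1 := by
          have h := s2_add_le (3 * t + 2) (3 * t) 2 rfl
          rw [hv2] at h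
          omega
        omega

theorem digit_lemma (k : ℕ) (hk : 0 < k) :
    (∑ j ∈ Finset.range k, (s2 (j + 2 * k) : ℤ)) -
      (∑ j ∈ Finset.range k, (s2 j : ℤ)) < 2 * k := by
  have hsplit : Ssum (3 * k) = Ssum (2 * k)
      + ∑ j ∈ Finset.range k, s2 (j + 2 * k) := by
    have h := Finset.sum_range_add s2 (2 * k) k
    have h3 : 2 * k + k = 3 * k := by ring
    rw [h3] at h
    rw [Ssum, Ssum, h]
    congr 1
    exact Finset.sum_congr rfl fun j _ => by rw [add_comm]
  have hdouble : Ssum (2 * k) = 2 * Ssum k + k := Ssum_double k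
  have hI1 := ((key k hk).1).1
  have hpos := s2_pos k hk
  have hc1 : (∑ j ∈ Finset.range k, (s2 (j + 2 * k) : ℤ))
      = ((∑ j ∈ Finset.range k, s2 (j + 2 * k) : ℕ) : ℤ) := by push_cast; rfl
  have hc2 : (∑ j ∈ Finset.range k, (s2 j : ℤ))
      = ((Ssum k : ℕ) : ℤ) := by rw [Ssum]; push_cast; rfl
  rw [hc1, hc2]
  omega
end

section
/- For every positive integer n, the 2-adic valuation of TSSCPP_{2n} = ∏_{1≤i≤j≤n} (i+j+n-1)/(2i+j-1) equals ∑_{j=1}^n (s_2(j+n-1) - s_2(3j-2)). -/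
open Finset

lemma pv_prod {α : Type*} (S : Finset α) (g : α → ℕ) (h : ∀ x ∈ S, g x ≠ 0) :
    padicValNat 2 (∏ x ∈ S, g x) = ∑ x ∈ S, padicValNat 2 (g x) := by
  rw [← Nat.factorization_def _ Nat.prime_two, Nat.factorization_prod h,
    Finset.sum_apply']
  exact Finset.sum_congr rfl fun x _ => Nat.factorization_def _ Nat.prime_two

/-- Valuation of b! as a sum. -/
def V (b : ℕ) : ℕ := ∑ m ∈ Finset.Ioc 0 b, padicValNat 2 m

lemma V_eq (b : ℕ) : (V b : ℤ) = (b : ℤ) - s2 b := by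
  have hV : V b = padicValNat 2 (Nat.factorial b) := by
    rw [← Finset.prod_Ico_id_eq_factorial, pv_prod _ _ (fun x hx => by
      simp only [mem_Ico] at hx; omega)]
    unfold V
    rw [Finset.Ico_add_one_right_eq_Icc, ← Finset.Icc_add_one_left_eq_Ioc, zero_add]
  haveI : Fact (Nat.Prime 2) := ⟨Nat.prime_two⟩
  have leg := sub_one_mul_padicValNat_factorial (p := 2) b
  have hle := Nat.digit_sum_le 2 b
  simp only [s2]
  omega

lemma sum_tel (a b : ℕ) (hab : a ≤ b) :
    ((∑ m ∈ Finset.Ioc a b, padicValNat 2 m : ℕ) : ℤ) = (V b : ℤ) - V a := by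
  have h : ∑ m ∈ Finset.Ioc 0 a, padicValNat 2 m + ∑ m ∈ Finset.Ioc a b, padicValNat 2 m
      = ∑ m ∈ Finset.Ioc 0 b, padicValNat 2 m :=
    Finset.sum_Ioc_consecutive _ (Nat.zero_le a) hab
  unfold V
  omega

lemma sum_shift (f : ℕ → ℕ) (a b c : ℕ) (ha : 1 ≤ a) :
    ∑ j ∈ Finset.Icc a b, f (j + c) = ∑ m ∈ Finset.Ioc (a + c - 1) (b + c), f m := by
  have h1 : Finset.Ioc (a + c - 1) (b + c) = Finset.Icc (a + c) (b + c) := by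
    rw [← Finset.Icc_add_one_left_eq_Ioc]
    congr 1
    omega
  rw [h1, ← Finset.map_add_right_Icc a b c, Finset.sum_map]
  rfl

lemma gauss (n : ℕ) : ∑ j ∈ Finset.Icc 1 n, (2 * (j : ℤ) - n - 1) = 0 := by
  induction n with
  | zero => simp
  | succ k ih =>
    rw [Finset.sum_Icc_succ_top (by omega)]
    have h1 : ∀ j : ℕ, (2 * (j : ℤ) - ((k : ℤ) + 1) - 1) = (2 * (j : ℤ) - k - 1) + (-1) := by
      intro j; ring
    push_cast
    simp only [h1]
    rw [Finset.sum_add_distrib, ih, Finset.sum_const, Nat.card_Icc]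
    push_cast
    ring

theorem v2_TSSCPP (n : ℕ) (hn : 0 < n) :
    padicValRat 2 (∏ i ∈ Finset.Icc 1 n, ∏ j ∈ Finset.Icc i n,
        (((i : ℚ) + j + n - 1) / (2 * (i : ℚ) + j - 1))) =
      ∑ j ∈ Finset.Icc 1 n, ((s2 (j + n - 1) : ℤ) - (s2 (3 * j - 2) : ℤ)) := by
  haveI : Fact (Nat.Prime 2) := ⟨Nat.prime_two⟩
  -- Step 1: rewrite as quotient of natural number products
  have key : ∀ i ∈ Finset.Icc 1 n, ∀ j ∈ Finset.Icc i n,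
      ((i : ℚ) + j + n - 1) / (2 * (i : ℚ) + j - 1)
        = (((i + j + n - 1 : ℕ) : ℚ)) / (((2 * i + j - 1 : ℕ) : ℚ)) := by
    intro i hi j hj
    simp only [mem_Icc] at hi hj
    have h1 : (1 : ℕ) ≤ i + j + n := by omega
    have h2 : (1 : ℕ) ≤ 2 * i + j := by omega
    rw [Nat.cast_sub h1, Nat.cast_sub h2]
    push_cast
    ring_nf
  rw [Finset.prod_congr rfl (fun i hi => Finset.prod_congr rfl (key i hi))]
  have hsplit : (∏ i ∈ Finset.Icc 1 n, ∏ j ∈ Finset.Icc i n,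
        (((i + j + n - 1 : ℕ) : ℚ)) / (((2 * i + j - 1 : ℕ) : ℚ)))
      = ((∏ i ∈ Finset.Icc 1 n, ∏ j ∈ Finset.Icc i n, (i + j + n - 1) : ℕ) : ℚ) /
        ((∏ i ∈ Finset.Icc 1 n, ∏ j ∈ Finset.Icc i n, (2 * i + j - 1) : ℕ) : ℚ) := by
    rw [Nat.cast_prod, Nat.cast_prod, ← Finset.prod_div_distrib]
    refine Finset.prod_congr rfl fun i _ => ?_
    rw [Nat.cast_prod, Nat.cast_prod, ← Finset.prod_div_distrib]
  rw [hsplit]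
  set N : ℕ := ∏ i ∈ Finset.Icc 1 n, ∏ j ∈ Finset.Icc i n, (i + j + n - 1) with hN
  set D : ℕ := ∏ i ∈ Finset.Icc 1 n, ∏ j ∈ Finset.Icc i n, (2 * i + j - 1) with hD
  have hNpos : ∀ i ∈ Finset.Icc 1 n, ∀ j ∈ Finset.Icc i n, i + j + n - 1 ≠ 0 := by
    intro i hi j hj; simp only [mem_Icc] at hi hj; omega
  have hDpos : ∀ i ∈ Finset.Icc 1 n, ∀ j ∈ Finset.Icc i n, 2 * i + j - 1 ≠ 0 := by
    intro i hi j hj; simp only [mem_Icc] at hi hj; omega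
  have hN0 : N ≠ 0 := by
    rw [hN, Finset.prod_ne_zero_iff]
    intro i hi
    rw [Finset.prod_ne_zero_iff]
    exact hNpos i hi
  have hD0 : D ≠ 0 := by
    rw [hD, Finset.prod_ne_zero_iff]
    intro i hi
    rw [Finset.prod_ne_zero_iff]
    exact hDpos i hi
  rw [padicValRat.div (p := 2) (by exact_mod_cast hN0) (by exact_mod_cast hD0),
    padicValRat.of_nat, padicValRat.of_nat]
  -- Step 2: valuation of products as double sums
  have hvN : padicValNat 2 N = ∑ i ∈ Finset.Icc 1 n, ∑ j ∈ Finset.Icc i n,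
      padicValNat 2 (i + j + n - 1) := by
    rw [hN, pv_prod _ _ (fun i hi => by
      rw [Finset.prod_ne_zero_iff]; exact hNpos i hi)]
    exact Finset.sum_congr rfl fun i hi => pv_prod _ _ (hNpos i hi)
  have hvD : padicValNat 2 D = ∑ i ∈ Finset.Icc 1 n, ∑ j ∈ Finset.Icc i n,
      padicValNat 2 (2 * i + j - 1) := by
    rw [hD, pv_prod _ _ (fun i hi => by
      rw [Finset.prod_ne_zero_iff]; exact hDpos i hi)]
    exact Finset.sum_congr rfl fun i hi => pv_prod _ _ (hDpos i hi)
  rw [hvN, hvD]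
  -- Step 3: numerator telescope
  have hnum : ∑ i ∈ Finset.Icc 1 n, ∑ j ∈ Finset.Icc i n, padicValNat 2 (i + j + n - 1)
      = ∑ j ∈ Finset.Icc 1 n, ∑ m ∈ Finset.Ioc (j + n - 1) (2 * j + n - 1),
          padicValNat 2 m := by
    rw [Finset.sum_comm' (t' := Finset.Icc 1 n) (s' := fun j => Finset.Icc 1 j)
      (by intro i j; simp only [mem_Icc]; omega)]
    refine Finset.sum_congr rfl fun j hj => ?_
    simp only [mem_Icc] at hj
    have h1 : ∀ i ∈ Finset.Icc 1 j, padicValNat 2 (i + j + n - 1)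
        = padicValNat 2 (i + (j + n - 1)) := by
      intro i hi; simp only [mem_Icc] at hi; congr 1; omega
    rw [Finset.sum_congr rfl h1, sum_shift (fun m => padicValNat 2 m) 1 j (j + n - 1) le_rfl]
    congr 1
    congr 1 <;> omega
  -- Step 4: denominator telescope
  have hden : ∑ i ∈ Finset.Icc 1 n, ∑ j ∈ Finset.Icc i n, padicValNat 2 (2 * i + j - 1)
      = ∑ i ∈ Finset.Icc 1 n, ∑ m ∈ Finset.Ioc (3 * i - 2) (2 * i + n - 1),
          padicValNat 2 m := by
    refine Finset.sum_congr rfl fun i hi => ?_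
    simp only [mem_Icc] at hi
    have h1 : ∀ j ∈ Finset.Icc i n, padicValNat 2 (2 * i + j - 1)
        = padicValNat 2 (j + (2 * i - 1)) := by
      intro j hj; simp only [mem_Icc] at hj; congr 1; omega
    rw [Finset.sum_congr rfl h1, sum_shift (fun m => padicValNat 2 m) i n (2 * i - 1) hi.1]
    congr 1
    congr 1 <;> omega
  rw [hnum, hden, Nat.cast_sum, Nat.cast_sum]
  have hnum2 : ∀ j ∈ Finset.Icc 1 n,
      ((∑ m ∈ Finset.Ioc (j + n - 1) (2 * j + n - 1), padicValNat 2 m : ℕ) : ℤ)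
        = (V (2 * j + n - 1) : ℤ) - V (j + n - 1) := by
    intro j hj; simp only [mem_Icc] at hj
    exact sum_tel _ _ (by omega)
  have hden2 : ∀ i ∈ Finset.Icc 1 n,
      ((∑ m ∈ Finset.Ioc (3 * i - 2) (2 * i + n - 1), padicValNat 2 m : ℕ) : ℤ)
        = (V (2 * i + n - 1) : ℤ) - V (3 * i - 2) := by
    intro i hi; simp only [mem_Icc] at hi
    exact sum_tel _ _ (by omega)
  rw [Finset.sum_congr rfl hnum2, Finset.sum_congr rfl hden2,
    ← Finset.sum_sub_distrib]
  rw [← sub_eq_zero, ← Finset.sum_sub_distrib]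
  have hterm : ∀ j ∈ Finset.Icc 1 n,
      ((V (2 * j + n - 1) : ℤ) - V (j + n - 1) - ((V (2 * j + n - 1) : ℤ) - V (3 * j - 2))
        - ((s2 (j + n - 1) : ℤ) - s2 (3 * j - 2)))
      = 2 * (j : ℤ) - n - 1 := by
    intro j hj; simp only [mem_Icc] at hj
    rw [V_eq, V_eq, V_eq]
    have c1 : ((3 * j - 2 : ℕ) : ℤ) = 3 * (j : ℤ) - 2 := by omega
    have c2 : ((j + n - 1 : ℕ) : ℤ) = (j : ℤ) + n - 1 := by omega
    rw [c1, c2]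
    ring
  rw [Finset.sum_congr rfl hterm]
  exact gauss n
end

section
/- For every positive integer n, ∑_{j=1}^n (s_2(j+n-1) - s_2(3j-2)) ≥ 0. -/
open Finset

/-- Sum over a full period of an AP with step coprime to `q` hits every residue once. -/
lemma period_sum (q c : ℕ) (hq : 0 < q) (hc : Nat.Coprime c q) (a : ℕ) :
    ∑ i ∈ range q, (a + c * i) % q = ∑ i ∈ range q, i := by
  have hinj : ∀ x ∈ range q, ∀ y ∈ range q,
      (a + c * x) % q = (a + c * y) % q → x = y := by
    intro x hx y hy h
    have h' : c * x ≡ c * y [MOD q] := Nat.ModEq.add_left_cancel' a h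
    have hxy : x ≡ y [MOD q] := Nat.ModEq.cancel_left_of_coprime (Nat.Coprime.symm hc) h'
    have hx' := mem_range.mp hx
    have hy' := mem_range.mp hy
    simpa [Nat.ModEq, Nat.mod_eq_of_lt hx', Nat.mod_eq_of_lt hy'] using hxy
  have hsub : (range q).image (fun i => (a + c * i) % q) ⊆ range q := by
    intro x hx
    obtain ⟨i, _, rfl⟩ := mem_image.mp hx
    exact mem_range.mpr (Nat.mod_lt _ hq)
  have hcard : ((range q).image (fun i => (a + c * i) % q)).card = (range q).card :=
    card_image_of_injOn (fun x hx y hy h => hinj x hx y hy h)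
  have himg : (range q).image (fun i => (a + c * i) % q) = range q :=
    eq_of_subset_of_card_le hsub (le_of_eq hcard.symm)
  calc ∑ i ∈ range q, (a + c * i) % q
      = ∑ x ∈ (range q).image (fun i => (a + c * i) % q), x :=
        (Finset.sum_image (f := fun x => x) hinj).symm
    _ = ∑ i ∈ range q, i := by rw [himg]

lemma ind_sum (a n : ℕ) : ∑ i ∈ range n, (if a ≤ i then 1 else 0) = n - a := by
  induction n with
  | zero => simp
  | succ n ih =>
    rw [Finset.sum_range_succ, ih]
    split <;> omega

lemma sums_eq (n : ℕ) : ∑ i ∈ range n, (3 * i + 1) = ∑ i ∈ range n, (n + i) := by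
  have h2 : (∑ i ∈ range n, i) * 2 = n * (n - 1) := Finset.sum_range_id_mul_two n
  have hsq : n * (n - 1) + n = n * n := by
    cases n with
    | zero => simp
    | succ k => simp [Nat.succ_sub_one]; ring
  have g1 : ∑ i ∈ range n, (3 * i + 1) = 3 * (∑ i ∈ range n, i) + n := by
    rw [Finset.sum_add_distrib, ← Finset.mul_sum]; simp
  have g2 : ∑ i ∈ range n, (n + i) = n * n + ∑ i ∈ range n, i := by
    rw [Finset.sum_add_distrib]; simp
  rw [g1, g2]
  omega

lemma mod_add_div_sum (q n : ℕ) (f : ℕ → ℕ) :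
    ∑ i ∈ range n, f i % q + q * ∑ i ∈ range n, f i / q = ∑ i ∈ range n, f i := by
  rw [Finset.mul_sum, ← Finset.sum_add_distrib]
  exact Finset.sum_congr rfl fun i _ => Nat.mod_add_div _ _

/-- Base case: the key mod-sum bound for `n < q`. -/
lemma modbase (q n : ℕ) (h3 : q % 3 ≠ 0) (hnq : n < q) :
    ∑ i ∈ range n, (3 * i + 1) % q ≤ ∑ i ∈ range n, (n + i) % q := by
  have hq : 0 < q := by omega
  set a := (q + 1) / 3 with ha
  set b := (2 * q + 1) / 3 with hb
  have hS : 2 * n - q ≤ ∑ i ∈ range n, (3 * i + 1) / q := by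
    have hstep : ∀ i ∈ range n,
        ((if a ≤ i then 1 else 0) + (if b ≤ i then 1 else 0)) ≤ (3 * i + 1) / q := by
      intro i _
      by_cases hbi : b ≤ i
      · have hab : a ≤ i := by omega
        have : 2 ≤ (3 * i + 1) / q := (Nat.le_div_iff_mul_le hq).mpr (by omega)
        simp only [hab, hbi, if_true]; omega
      · by_cases hai : a ≤ i
        · have hq1 : q ≤ 3 * i + 1 := by omega
          have : 1 ≤ (3 * i + 1) / q := (Nat.one_le_div_iff hq).mpr hq1
          simp only [hai, hbi, if_true, if_false]; omega
        · simp [hai, hbi]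
    calc 2 * n - q ≤ (n - a) + (n - b) := by omega
      _ = ∑ i ∈ range n, ((if a ≤ i then 1 else 0) + (if b ≤ i then 1 else 0)) := by
          rw [Finset.sum_add_distrib, ind_sum, ind_sum]
      _ ≤ _ := Finset.sum_le_sum hstep
  have hD : ∑ i ∈ range n, (n + i) / q ≤ 2 * n - q := by
    have hstep : ∀ i ∈ range n, (n + i) / q ≤ (if q - n ≤ i then 1 else 0) := by
      intro i hi
      have hi' := mem_range.mp hi
      by_cases hqi : q - n ≤ i
      · have : (n + i) / q < 2 := (Nat.div_lt_iff_lt_mul hq).mpr (by omega)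
        simp only [hqi, if_true]; omega
      · have hlt : n + i < q := by omega
        simp [hqi, Nat.div_eq_of_lt hlt]
    calc ∑ i ∈ range n, (n + i) / q
        ≤ ∑ i ∈ range n, (if q - n ≤ i then 1 else 0) := Finset.sum_le_sum hstep
      _ = n - (q - n) := ind_sum _ _
      _ ≤ 2 * n - q := by omega
  have hA1 := mod_add_div_sum q n (fun i => 3 * i + 1)
  have hA2 := mod_add_div_sum q n (fun i => n + i)
  have hT := sums_eq n
  have hmul : q * ∑ i ∈ range n, (n + i) / q ≤ q * ∑ i ∈ range n, (3 * i + 1) / q :=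
    Nat.mul_le_mul_left q (hD.trans hS)
  omega

/-- The key mod-sum inequality. -/
lemma modkey (q : ℕ) (hq : 0 < q) (h3 : ¬ 3 ∣ q) (n : ℕ) :
    ∑ i ∈ range n, (3 * i + 1) % q ≤ ∑ i ∈ range n, (n + i) % q := by
  induction n using Nat.strong_induction_on with
  | _ n ih =>
    by_cases hnq : n < q
    · exact modbase q n (fun h => h3 (Nat.dvd_of_mod_eq_zero h)) hnq
    · have hm : n = (n - q) + q := by omega
      set m := n - q with hmdef
      rw [hm]
      have hL : ∑ i ∈ range (m + q), (m + q + i) % q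
          = ∑ i ∈ range m, (m + i) % q + ∑ i ∈ range q, i := by
        have e1 : ∀ i : ℕ, (m + q + i) % q = (m + i) % q := by
          intro i
          conv_lhs => rw [show m + q + i = m + i + q by ring]
          rw [Nat.add_mod_right]
        simp only [e1]
        rw [Finset.sum_range_add]
        congr 1
        calc ∑ i ∈ range q, (m + (m + i)) % q
            = ∑ i ∈ range q, (2 * m + 1 * i) % q := by
              apply Finset.sum_congr rfl; intro i _; congr 1; ring
          _ = ∑ i ∈ range q, i := period_sum q 1 hq (Nat.coprime_one_left q) (2 * m)
      have hR : ∑ i ∈ range (m + q), (3 * i + 1) % q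
          = ∑ i ∈ range m, (3 * i + 1) % q + ∑ i ∈ range q, i := by
        rw [Finset.sum_range_add]
        congr 1
        calc ∑ i ∈ range q, (3 * (m + i) + 1) % q
            = ∑ i ∈ range q, ((3 * m + 1) + 3 * i) % q := by
              apply Finset.sum_congr rfl; intro i _; congr 1; ring
          _ = ∑ i ∈ range q, i :=
              period_sum q 3 hq
                ((Nat.Prime.coprime_iff_not_dvd Nat.prime_three).mpr h3) (3 * m + 1)
      rw [hL, hR]
      have hmn : m < n := by omega
      exact Nat.add_le_add_right (ih m hmn) _

/-- The key floor-division-sum inequality. -/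
lemma divkey (q : ℕ) (hq : 0 < q) (h3 : ¬ 3 ∣ q) (n : ℕ) :
    ∑ i ∈ range n, (n + i) / q ≤ ∑ i ∈ range n, (3 * i + 1) / q := by
  have hA1 := mod_add_div_sum q n (fun i => 3 * i + 1)
  have hA2 := mod_add_div_sum q n (fun i => n + i)
  have hT := sums_eq n
  have hM := modkey q hq h3 n
  have hmul : q * ∑ i ∈ range n, (n + i) / q ≤ q * ∑ i ∈ range n, (3 * i + 1) / q := by
    omega
  exact Nat.le_of_mul_le_mul_left hmul hq

lemma s2_fact (m : ℕ) : s2 m + padicValNat 2 (Nat.factorial m) = m := by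
  haveI : Fact (Nat.Prime 2) := ⟨Nat.prime_two⟩
  have h := sub_one_mul_padicValNat_factorial (p := 2) m
  have hle := Nat.digit_sum_le 2 m
  simp only [show (2 : ℕ) - 1 = 1 by rfl, one_mul] at h
  unfold s2
  omega

theorem sum_nonneg_TSSCPP (n : ℕ) (hn : 0 < n) :
    0 ≤ ∑ j ∈ Finset.Icc 1 n, ((s2 (j + n - 1) : ℤ) - (s2 (3 * j - 2) : ℤ)) := by
  haveI : Fact (Nat.Prime 2) := ⟨Nat.prime_two⟩
  -- reindex to range n
  have hre : ∑ j ∈ Finset.Icc 1 n, ((s2 (j + n - 1) : ℤ) - (s2 (3 * j - 2) : ℤ))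
      = ∑ i ∈ range n, ((s2 (n + i) : ℤ) - (s2 (3 * i + 1) : ℤ)) := by
    rw [← Finset.Ico_add_one_right_eq_Icc, Finset.sum_Ico_eq_sum_range]
    apply Finset.sum_congr (by simp)
    intro i _
    have e1 : 1 + i + n - 1 = n + i := by omega
    have e2 : 3 * (1 + i) - 2 = 3 * i + 1 := by omega
    rw [e1, e2]
  rw [hre, Finset.sum_sub_distrib, sub_nonneg, ← Nat.cast_sum, ← Nat.cast_sum, Nat.cast_le]
  -- now a ℕ inequality on digit sums
  have E1 : ∑ i ∈ range n, s2 (3 * i + 1)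
      + ∑ i ∈ range n, padicValNat 2 (Nat.factorial (3 * i + 1))
      = ∑ i ∈ range n, (3 * i + 1) := by
    rw [← Finset.sum_add_distrib]
    exact Finset.sum_congr rfl fun i _ => s2_fact _
  have E2 : ∑ i ∈ range n, s2 (n + i)
      + ∑ i ∈ range n, padicValNat 2 (Nat.factorial (n + i))
      = ∑ i ∈ range n, (n + i) := by
    rw [← Finset.sum_add_distrib]
    exact Finset.sum_congr rfl fun i _ => s2_fact _
  have hT := sums_eq n
  have V : ∑ i ∈ range n, padicValNat 2 (Nat.factorial (n + i))
      ≤ ∑ i ∈ range n, padicValNat 2 (Nat.factorial (3 * i + 1)) := by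
    have hb1 : ∀ i ∈ range n, padicValNat 2 (Nat.factorial (n + i))
        = ∑ k ∈ Finset.Ico 1 (3 * n), (n + i) / 2 ^ k := by
      intro i hi
      have hi' := mem_range.mp hi
      exact padicValNat_factorial (lt_of_le_of_lt (Nat.log_le_self 2 (n + i)) (by omega))
    have hb2 : ∀ i ∈ range n, padicValNat 2 (Nat.factorial (3 * i + 1))
        = ∑ k ∈ Finset.Ico 1 (3 * n), (3 * i + 1) / 2 ^ k := by
      intro i hi
      have hi' := mem_range.mp hi
      exact padicValNat_factorial (lt_of_le_of_lt (Nat.log_le_self 2 (3 * i + 1)) (by omega))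
    rw [Finset.sum_congr rfl hb1, Finset.sum_congr rfl hb2,
      Finset.sum_comm, Finset.sum_comm (s := range n)]
    apply Finset.sum_le_sum
    intro k _
    apply divkey (2 ^ k) (pow_pos (by norm_num) k)
    intro hdvd
    have := Nat.Prime.dvd_of_dvd_pow (p := 3) Nat.prime_three hdvd
    omega
  omega
end

section
/- For every positive odd integer n, v_2(PP_n) - v_2(TSPP_n) = s_2(3n-1) - s_2(n-1) + ∑_{j=1}^n (s_2(2n-j) - s_2(3n+1-2j) + s_2(j-1) - s_2(3j-2)). -/
open Finset

def Vv (k : ℕ) : ℤ := padicValNat 2 k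
def Ww (k : ℕ) : ℤ := padicValNat 2 (Nat.factorial k)

lemma s2W (k : ℕ) : (s2 k : ℤ) = k - Ww k := by
  have h := sub_one_mul_padicValNat_factorial (p := 2) k
  norm_num at h
  have h2 := Nat.digit_sum_le 2 k
  unfold Ww s2
  omega

lemma Ww_succ (k : ℕ) : Ww (k+1) = Ww k + Vv (k+1) := by
  unfold Ww Vv
  rw [Nat.factorial_succ, padicValNat.mul (Nat.succ_ne_zero k) (Nat.factorial_ne_zero k)]
  push_cast; ring

lemma sumVr (c : ℕ) : ∀ t, ∑ r ∈ range t, Vv (c + r + 1) = Ww (c + t) - Ww c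
  | 0 => by simp
  | t+1 => by
      rw [Finset.sum_range_succ, sumVr c t, show c + (t+1) = (c+t)+1 from rfl, Ww_succ]
      ring

lemma tele (f : ℕ → ℤ) (a : ℕ) : ∀ (b : ℕ), a ≤ b + 1 →
    ∑ k ∈ Icc a b, (f (k+1) - f k) = f (b+1) - f a
  | 0, h => by
      interval_cases a
      · simp
      · rw [show Icc 1 0 = ∅ from rfl]; simp
  | b+1, h => by
      by_cases h' : a ≤ b + 1
      · rw [Finset.sum_Icc_succ_top h', tele f a b h']; ring
      · have ha : a = b + 2 := by omega
        subst ha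
        rw [Finset.Icc_eq_empty (by omega)]; simp

lemma s2_double (k : ℕ) : s2 (2*k) = s2 k := by
  rcases Nat.eq_zero_or_pos k with rfl | hk
  · rfl
  · unfold s2
    rw [Nat.digits_def' (by norm_num : (1:ℕ) < 2) (by omega : 0 < 2*k)]
    rw [show 2*k % 2 = 0 by omega, show 2*k/2 = k by omega]
    simp

lemma s2_double_add_one (k : ℕ) : s2 (2*k+1) = s2 k + 1 := by
  unfold s2
  rw [Nat.digits_def' (by norm_num : (1:ℕ) < 2) (by omega : 0 < 2*k+1)]
  rw [show (2*k+1) % 2 = 1 by omega, show (2*k+1)/2 = k by omega]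
  simp [Nat.add_comm]

lemma Ww_double (k : ℕ) : Ww (2*k) = k + Ww k := by
  have h1 := s2W (2*k); have h2 := s2W k
  rw [s2_double] at h1
  push_cast at h1 h2 ⊢
  linarith

lemma Ww_odd (k : ℕ) : Ww (2*k+1) = k + Ww k := by
  have h1 := s2W (2*k+1); have h2 := s2W k
  rw [s2_double_add_one] at h1
  push_cast at h1 h2 ⊢
  linarith

lemma claimA : ∀ t : ℕ, ∑ u ∈ range (2*t), (s2 u : ℤ) = 2 * ∑ u ∈ range t, (s2 u : ℤ) + t
  | 0 => by simp
  | t+1 => by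
      rw [show 2*(t+1) = (2*t) + 1 + 1 by ring, Finset.sum_range_succ, Finset.sum_range_succ,
        Finset.sum_range_succ, claimA t, s2_double, s2_double_add_one]
      push_cast; ring

lemma gaussI : ∀ t : ℕ, 2 * ∑ b ∈ range t, (b:ℤ) = t*t - t
  | 0 => by simp
  | t+1 => by rw [Finset.sum_range_succ, mul_add, gaussI t]; push_cast; ring

lemma sumW_shift (t : ℕ) : ∑ b ∈ range t, Ww (t+b) = ∑ b ∈ range t, Ww b + ((t:ℤ)*t - t) := by
  have key : ∀ b : ℕ, Ww (t+b) = Ww b + (t:ℤ) + (s2 b : ℤ) - (s2 (t+b) : ℤ) := by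
    intro b
    have h1 := s2W (t+b); have h2 := s2W b
    push_cast at h1 h2
    linarith
  rw [Finset.sum_congr rfl fun b _ => key b]
  have hsplit := Finset.sum_range_add (fun u => (s2 u : ℤ)) t t
  have hA := claimA t
  rw [show 2*t = t + t by ring] at hA
  simp only [Finset.sum_add_distrib, Finset.sum_sub_distrib, Finset.sum_const,
    Finset.card_range, nsmul_eq_mul]
  push_cast
  linarith

lemma sumZZ (m t : ℕ) : ∑ b ∈ range t, Ww (m+1+b) = ∑ b ∈ range t, Ww (m+b) + (Ww (m+t) - Ww m) := by
  have key : ∀ b : ℕ, Ww (m+1+b) = Ww (m+b) + Vv (m+b+1) := by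
    intro b
    rw [show m+1+b = (m+b)+1 by ring, Ww_succ]
  rw [Finset.sum_congr rfl fun b _ => key b, Finset.sum_add_distrib, sumVr m t]

lemma Icc_to_range {M : Type*} [AddCommMonoid M] (g : ℕ → M) (a t : ℕ) :
    ∑ i ∈ Icc (a+1) t, g i = ∑ b ∈ range (t-a), g (a+1+b) := by
  rw [← Finset.Ico_add_one_right_eq_Icc, Finset.sum_Ico_eq_sum_range, show t+1-(a+1) = t-a by omega]

lemma val_prod {α : Type*} (s : Finset α) (f : α → ℚ) (h : ∀ a ∈ s, f a ≠ 0) :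
    padicValRat 2 (∏ a ∈ s, f a) = ∑ a ∈ s, padicValRat 2 (f a) := by
  classical
  induction s using Finset.induction_on with
  | empty => simp
  | @insert x s hx ih =>
      rw [Finset.prod_insert hx, Finset.sum_insert hx,
        padicValRat.mul (h x (Finset.mem_insert_self x s))
          (Finset.prod_ne_zero_iff.mpr fun a ha => h a (Finset.mem_insert_of_mem ha)),
        ih fun a ha => h a (Finset.mem_insert_of_mem ha)]

lemma factor_pos (i j k : ℕ) (hi : 1 ≤ i) (hj : 1 ≤ j) (hk : 1 ≤ k) :
    (0:ℚ) < ((i:ℚ) + j + k - 1) / ((i:ℚ) + j + k - 2) := by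
  have h1 : (1:ℚ) ≤ i := by exact_mod_cast hi
  have h2 : (1:ℚ) ≤ j := by exact_mod_cast hj
  have h3 : (1:ℚ) ≤ k := by exact_mod_cast hk
  apply div_pos <;> linarith

lemma factor_val (i j k : ℕ) (hi : 1 ≤ i) (hj : 1 ≤ j) (hk : 1 ≤ k) :
    padicValRat 2 (((i:ℚ) + j + k - 1) / ((i:ℚ) + j + k - 2))
      = Vv (i+j+k-1) - Vv (i+j+k-2) := by
  obtain ⟨d, hd⟩ : ∃ d, i + j + k = d + 3 := ⟨i+j+k-3, by omega⟩
  have hq : (i:ℚ) + j + k = (d:ℚ) + 3 := by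
    have := congrArg (fun x : ℕ => (x:ℚ)) hd
    push_cast at this
    linarith
  have e1 : (i:ℚ) + j + k - 1 = ((d+2 : ℕ) : ℚ) := by push_cast; linarith
  have e2 : (i:ℚ) + j + k - 2 = ((d+1 : ℕ) : ℚ) := by push_cast; linarith
  rw [e1, e2, padicValRat.div (by positivity) (by positivity),
    padicValRat.of_nat, padicValRat.of_nat,
    show i+j+k-1 = d+2 by omega, show i+j+k-2 = d+1 by omega]
  rfl

lemma Icc1_to_range {M : Type*} [AddCommMonoid M] (g : ℕ → M) (t : ℕ) :
    ∑ i ∈ Icc 1 t, g i = ∑ b ∈ range t, g (b+1) := by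
  have h := Icc_to_range g 0 t
  norm_num at h
  rw [h]
  exact Finset.sum_congr rfl fun b _ => by rw [Nat.add_comm]

section main
variable (n : ℕ)

lemma hPP :
    padicValRat 2 (∏ i ∈ Finset.Icc 1 n, ∏ j ∈ Finset.Icc 1 n, ∏ k ∈ Finset.Icc 1 n,
        (((i : ℚ) + j + k - 1) / ((i : ℚ) + j + k - 2)))
    = ∑ i ∈ Icc 1 n, ∑ j ∈ Icc 1 n, ∑ k ∈ Icc 1 n, (Vv (i+j+k-1) - Vv (i+j+k-2)) := by
  have hne : ∀ i j k : ℕ, 1 ≤ i → 1 ≤ j → 1 ≤ k →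
      ((i:ℚ)+j+k-1)/((i:ℚ)+j+k-2) ≠ 0 :=
    fun i j k hi hj hk => ne_of_gt (factor_pos i j k hi hj hk)
  rw [val_prod _ _ (fun i hi => Finset.prod_ne_zero_iff.mpr fun j hj =>
    Finset.prod_ne_zero_iff.mpr fun k hk => hne i j k (Finset.mem_Icc.mp hi).1
      (Finset.mem_Icc.mp hj).1 (Finset.mem_Icc.mp hk).1)]
  refine Finset.sum_congr rfl fun i hi => ?_
  rw [val_prod _ _ (fun j hj => Finset.prod_ne_zero_iff.mpr fun k hk =>
    hne i j k (Finset.mem_Icc.mp hi).1 (Finset.mem_Icc.mp hj).1 (Finset.mem_Icc.mp hk).1)]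
  refine Finset.sum_congr rfl fun j hj => ?_
  rw [val_prod _ _ (fun k hk => hne i j k (Finset.mem_Icc.mp hi).1 (Finset.mem_Icc.mp hj).1
    (Finset.mem_Icc.mp hk).1)]
  exact Finset.sum_congr rfl fun k hk => factor_val i j k (Finset.mem_Icc.mp hi).1
    (Finset.mem_Icc.mp hj).1 (Finset.mem_Icc.mp hk).1

lemma hTS :
    padicValRat 2 (∏ i ∈ Finset.Icc 1 n, ∏ j ∈ Finset.Icc i n, ∏ k ∈ Finset.Icc j n,
        (((i : ℚ) + j + k - 1) / ((i : ℚ) + j + k - 2)))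
    = ∑ i ∈ Icc 1 n, ∑ j ∈ Icc i n, ∑ k ∈ Icc j n, (Vv (i+j+k-1) - Vv (i+j+k-2)) := by
  have hne : ∀ i j k : ℕ, 1 ≤ i → 1 ≤ j → 1 ≤ k →
      ((i:ℚ)+j+k-1)/((i:ℚ)+j+k-2) ≠ 0 :=
    fun i j k hi hj hk => ne_of_gt (factor_pos i j k hi hj hk)
  have mem1 : ∀ {a b : ℕ}, a ∈ Icc 1 b → 1 ≤ a := fun h => (Finset.mem_Icc.mp h).1
  have mem2 : ∀ {a b c : ℕ}, 1 ≤ a → b ∈ Icc a c → 1 ≤ b :=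
    fun ha h => le_trans ha (Finset.mem_Icc.mp h).1
  rw [val_prod _ _ (fun i hi => Finset.prod_ne_zero_iff.mpr fun j hj =>
    Finset.prod_ne_zero_iff.mpr fun k hk => hne i j k (mem1 hi) (mem2 (mem1 hi) hj)
      (mem2 (mem2 (mem1 hi) hj) hk))]
  refine Finset.sum_congr rfl fun i hi => ?_
  rw [val_prod _ _ (fun j hj => Finset.prod_ne_zero_iff.mpr fun k hk =>
    hne i j k (mem1 hi) (mem2 (mem1 hi) hj) (mem2 (mem2 (mem1 hi) hj) hk))]
  refine Finset.sum_congr rfl fun j hj => ?_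
  rw [val_prod _ _ (fun k hk => hne i j k (mem1 hi) (mem2 (mem1 hi) hj)
    (mem2 (mem2 (mem1 hi) hj) hk))]
  exact Finset.sum_congr rfl fun k hk => factor_val i j k (mem1 hi) (mem2 (mem1 hi) hj)
    (mem2 (mem2 (mem1 hi) hj) hk)

end main

lemma hPPsum (n : ℕ) :
    ∑ i ∈ Icc 1 n, ∑ j ∈ Icc 1 n, ∑ k ∈ Icc 1 n, (Vv (i+j+k-1) - Vv (i+j+k-2))
    = ∑ a ∈ range n, (Ww (a+n+n) - 2*Ww (a+n) + Ww a) := by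
  rw [Icc1_to_range]
  refine Finset.sum_congr rfl fun a _ => ?_
  rw [Icc1_to_range]
  have hin : ∀ b : ℕ, ∑ k ∈ Icc 1 n, (Vv ((a+1)+(b+1)+k-1) - Vv ((a+1)+(b+1)+k-2))
      = Vv (a+n+b+1) - Vv (a+b+1) := by
    intro b
    have hcg : ∀ k ∈ Icc 1 n, Vv ((a+1)+(b+1)+k-1) - Vv ((a+1)+(b+1)+k-2)
        = (fun x => Vv (a+b+x)) (k+1) - (fun x => Vv (a+b+x)) k := by
      intro k hk
      have hk1 : 1 ≤ k := (Finset.mem_Icc.mp hk).1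
      simp only
      rw [show (a+1)+(b+1)+k-1 = a+b+(k+1) by omega, show (a+1)+(b+1)+k-2 = a+b+k by omega]
    have t1 := tele (fun x => Vv (a+b+x)) 1 n (by omega)
    rw [Finset.sum_congr rfl hcg, t1]
    show Vv (a+b+(n+1)) - Vv (a+b+1) = _
    rw [show a+b+(n+1) = a+n+b+1 by omega]
  rw [Finset.sum_congr rfl fun b _ => hin b, Finset.sum_sub_distrib,
    sumVr (a+n) n, sumVr a n]
  ring

lemma hTSsum (n : ℕ) :
    ∑ i ∈ Icc 1 n, ∑ j ∈ Icc i n, ∑ k ∈ Icc j n, (Vv (i+j+k-1) - Vv (i+j+k-2))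
    = (∑ a ∈ range n, (Ww (a+n+n) - Ww (n+2*a)))
      - ∑ s ∈ range n, (Ww (3*s+1) - Ww (2*s)) := by
  rw [Icc1_to_range]
  have houter : ∀ a ∈ range n,
      ∑ j ∈ Icc (a+1) n, ∑ k ∈ Icc j n, (Vv ((a+1)+j+k-1) - Vv ((a+1)+j+k-2))
      = (Ww (a+n+n) - Ww (n+2*a)) - ∑ b ∈ range (n-a), Vv (3*a+2*b+1) := by
    intro a ha
    have ha' : a < n := Finset.mem_range.mp ha
    rw [Icc_to_range]
    have hmid : ∀ b ∈ range (n-a),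
        ∑ k ∈ Icc (a+1+b) n, (Vv ((a+1)+(a+1+b)+k-1) - Vv ((a+1)+(a+1+b)+k-2))
        = Vv ((n+2*a)+b+1) - Vv (3*a+2*b+1) := by
      intro b hb
      have hb' : b < n - a := Finset.mem_range.mp hb
      have hcg : ∀ k ∈ Icc (a+1+b) n, Vv ((a+1)+(a+1+b)+k-1) - Vv ((a+1)+(a+1+b)+k-2)
          = (fun x => Vv (2*a+b+x)) (k+1) - (fun x => Vv (2*a+b+x)) k := by
        intro k hk
        simp only
        rw [show (a+1)+(a+1+b)+k-1 = 2*a+b+(k+1) by omega,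
          show (a+1)+(a+1+b)+k-2 = 2*a+b+k by omega]
      have t1 := tele (fun x => Vv (2*a+b+x)) (a+1+b) n (by omega)
      rw [Finset.sum_congr rfl hcg, t1]
      show Vv (2*a+b+(n+1)) - Vv (2*a+b+(a+1+b)) = _
      rw [show 2*a+b+(n+1) = (n+2*a)+b+1 by omega,
        show 2*a+b+(a+1+b) = 3*a+2*b+1 by omega]
    rw [Finset.sum_congr rfl hmid, Finset.sum_sub_distrib, sumVr (n+2*a) (n-a),
      show n+2*a+(n-a) = a+n+n by omega]
  rw [Finset.sum_congr rfl houter, Finset.sum_sub_distrib]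
  congr 1
  -- D-term: swap
  have step1 : ∀ a ∈ range n, ∑ b ∈ range (n-a), Vv (3*a+2*b+1)
      = ∑ s ∈ Ico a n, Vv (a+2*s+1) := by
    intro a _
    rw [Finset.sum_Ico_eq_sum_range]
    exact Finset.sum_congr rfl fun b _ => by rw [show a+2*(a+b)+1 = 3*a+2*b+1 by omega]
  rw [Finset.sum_congr rfl step1]
  rw [Finset.sum_comm' (s' := fun s => range (s+1)) (t' := range n)
    (fun x y => by simp only [Finset.mem_range, Finset.mem_Ico]; omega)]
  refine Finset.sum_congr rfl fun s _ => ?_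
  have : ∀ a ∈ range (s+1), Vv (a+2*s+1) = Vv (2*s+a+1) :=
    fun a _ => by rw [show a+2*s+1 = 2*s+a+1 by omega]
  rw [Finset.sum_congr rfl this, sumVr (2*s) (s+1), show 2*s+(s+1) = 3*s+1 by omega]

lemma final (n m : ℕ) (hm : n = 2*m+1) :
    (∑ a ∈ range n, (Ww (a+n+n) - 2*Ww (a+n) + Ww a))
      - ((∑ a ∈ range n, (Ww (a+n+n) - Ww (n+2*a))) - ∑ s ∈ range n, (Ww (3*s+1) - Ww (2*s)))
    = (s2 (3 * n - 1) : ℤ) - (s2 (n - 1) : ℤ) + ∑ j ∈ Finset.Icc 1 n,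
        ((s2 (2 * n - j) : ℤ) - (s2 (3 * n + 1 - 2 * j) : ℤ)
          + (s2 (j - 1) : ℤ) - (s2 (3 * j - 2) : ℤ)) := by
  rw [Icc1_to_range]
  have hjb : ∀ b ∈ range n,
      (s2 (2*n-(b+1)) : ℤ) - (s2 (3*n+1-2*(b+1)) : ℤ) + (s2 (b+1-1) : ℤ) - (s2 (3*(b+1)-2) : ℤ)
      = (s2 ((n-1-b)+n) : ℤ) - (s2 (m+1+(n-1-b)) : ℤ) + (s2 b : ℤ) - (s2 (3*b+1) : ℤ) := by
    intro b hb
    have hb' : b < n := Finset.mem_range.mp hb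
    rw [show 2*n-(b+1) = (n-1-b)+n by omega,
      show 3*n+1-2*(b+1) = 2*(m+1+(n-1-b)) by omega, s2_double,
      show b+1-1 = b by omega, show 3*(b+1)-2 = 3*b+1 by omega]
  rw [Finset.sum_congr rfl hjb]
  simp only [Finset.sum_sub_distrib, Finset.sum_add_distrib]
  rw [Finset.sum_range_reflect (fun x => (s2 (x+n) : ℤ)) n,
    Finset.sum_range_reflect (fun x => (s2 (m+1+x) : ℤ)) n]
  -- convert s2-sums to Ww-sums
  have c1 : ∑ b ∈ range n, (s2 (b+n) : ℤ)
      = (∑ b ∈ range n, ((b:ℤ) + n)) - ∑ b ∈ range n, Ww (b+n) := by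
    rw [← Finset.sum_sub_distrib]
    exact Finset.sum_congr rfl fun b _ => by rw [s2W]; push_cast; ring
  have c2 : ∑ b ∈ range n, (s2 (m+1+b) : ℤ)
      = (∑ b ∈ range n, ((m:ℤ) + 1 + b)) - ∑ b ∈ range n, Ww (m+1+b) := by
    rw [← Finset.sum_sub_distrib]
    exact Finset.sum_congr rfl fun b _ => by rw [s2W]; push_cast; ring
  have c3 : ∑ b ∈ range n, (s2 b : ℤ) = (∑ b ∈ range n, (b:ℤ)) - ∑ b ∈ range n, Ww b := by
    rw [← Finset.sum_sub_distrib]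
    exact Finset.sum_congr rfl fun b _ => by rw [s2W]
  have c4 : ∑ b ∈ range n, (s2 (3*b+1) : ℤ)
      = (∑ b ∈ range n, (3*(b:ℤ) + 1)) - ∑ b ∈ range n, Ww (3*b+1) := by
    rw [← Finset.sum_sub_distrib]
    exact Finset.sum_congr rfl fun b _ => by rw [s2W]; push_cast; ring
  rw [c1, c2, c3, c4]
  -- singles
  rw [show 3*n-1 = 2*(3*m+1) by omega, show n-1 = 2*m by omega,
    s2W (2*(3*m+1)), s2W (2*m), Ww_double (3*m+1), Ww_double m]
  -- LHS conversions
  have l1 : ∑ a ∈ range n, Ww (n+2*a)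
      = (∑ a ∈ range n, ((m:ℤ) + a)) + ∑ a ∈ range n, Ww (m+a) := by
    rw [← Finset.sum_add_distrib]
    refine Finset.sum_congr rfl fun a _ => ?_
    rw [show n+2*a = 2*(m+a)+1 by omega, Ww_odd]
    push_cast; ring
  have l2 : ∑ s ∈ range n, Ww (2*s) = (∑ s ∈ range n, (s:ℤ)) + ∑ s ∈ range n, Ww s := by
    rw [← Finset.sum_add_distrib]
    exact Finset.sum_congr rfl fun s _ => by rw [Ww_double]
  have al : ∑ a ∈ range n, Ww (a+n) = ∑ a ∈ range n, Ww (n+a) :=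
    Finset.sum_congr rfl fun a _ => by rw [Nat.add_comm]
  have al2 : ∑ b ∈ range n, Ww (b+n) = ∑ a ∈ range n, Ww (n+a) :=
    Finset.sum_congr rfl fun a _ => by rw [Nat.add_comm]
  have l3 := sumW_shift n
  have l4 := sumZZ m n
  rw [show m+n = 3*m+1 by omega] at l4
  have al3 : ∑ x ∈ range n, 2 * Ww (x+n) = 2 * (∑ b ∈ range n, Ww b + ((n:ℤ)*n - n)) := by
    rw [← Finset.mul_sum, al, l3]
  rw [l1, l2, al2, l3, l4, al3]
  simp only [Finset.sum_add_distrib, Finset.sum_sub_distrib, Finset.sum_const,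
    Finset.card_range, nsmul_eq_mul]
  have hg := gaussI n
  have hmz : (n:ℤ) = 2*(m:ℤ)+1 := by exact_mod_cast congrArg (Nat.cast : ℕ → ℤ) hm
  have hT : ∑ x ∈ range n, (3:ℤ) * (x:ℤ) = 3 * ∑ x ∈ range n, (x:ℤ) := by
    rw [Finset.mul_sum]
  have hNN : (n:ℤ) * (n:ℤ) = 2*((n:ℤ)*(m:ℤ)) + (n:ℤ) := by rw [hmz]; ring
  push_cast
  linarith [hg, hmz, hT, hNN]

theorem v2_diff_odd (n : ℕ) (hn : 0 < n) (hodd : Odd n) :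
    padicValRat 2 (∏ i ∈ Finset.Icc 1 n, ∏ j ∈ Finset.Icc 1 n, ∏ k ∈ Finset.Icc 1 n,
        (((i : ℚ) + j + k - 1) / ((i : ℚ) + j + k - 2))) -
      padicValRat 2 (∏ i ∈ Finset.Icc 1 n, ∏ j ∈ Finset.Icc i n, ∏ k ∈ Finset.Icc j n,
        (((i : ℚ) + j + k - 1) / ((i : ℚ) + j + k - 2))) =
      (s2 (3 * n - 1) : ℤ) - (s2 (n - 1) : ℤ) + ∑ j ∈ Finset.Icc 1 n,
        ((s2 (2 * n - j) : ℤ) - (s2 (3 * n + 1 - 2 * j) : ℤ)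
          + (s2 (j - 1) : ℤ) - (s2 (3 * j - 2) : ℤ)) := by
  obtain ⟨m, hm⟩ := hodd
  rw [hPP n, hTS n, hPPsum n, hTSsum n]
  exact final n m hm
end
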